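/- Let x₀, v_max, a > 0 and t₀ < t_f1 ≤ t_f, with Δ := t_f − t₀ and S := t_f − t_f1 ≥ 0. Assume x₀/v_max ≤ Δ < x₀/v_max + v_max/a. Set u := v_max − √(a(v_max·Δ − x₀)), t_acc := t_f1 − (v_max − u)/a, t_dec := t_acc − (v_max − u)/a, and assume t_dec ≥ t₀. Define x* on [t₀, t_f] by: x*(s) = −x₀ + v_max(s − t₀) for s ∈ [t₀, t_dec]; x*(s) = −x₀ + v_max(s − t₀) − (a/2)(s − t_dec)² for s ∈ [t_dec, t_acc]; x*(s) = −x₀ + v_max(t_acc − t₀) − (v_max − u)²/(2a) + u(s − t_acc) + (a/2)(s − t_acc)² for s ∈ [t_acc, t_f1]; x*(s) = −v_max·S + v_max(s − t_f1) for s ∈ [t_f1, t_f]. Then x* belongs to Π(t₀, t_f, x₀, v_max, a) and satisfies x*(t_f1) = −v_max·S and ẋ*(t_acc) = u with 0 < u ≤ v_max. -/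

import Mathlib

/-!
With `T = √(a (v_max Δ - x₀)) / a`, the trajectory is `-x₀ + v_max (s - t₀)` minus `a/2` times the
second difference of the squared ramps `((s - b)⁺)²` at the breakpoints `t_dec, t_acc, t_f1`.
Its speed is therefore `v_max - a · max (T - |s - t_acc|) 0`: a tent of slope `a`, which is
`a`-Lipschitz and ranges over `[v_max - a T, v_max]`. The terminal condition `x(t_f) = 0` is
exactly `a T² = v_max Δ - x₀`, and `v_max - a T > 0` is the upper bound on `Δ`.
-/

/-- The class `Π(t₀, t_f, x₀, v_max, a)` of compatible trajectories. -/
def CompatTraj (t₀ tf x₀ vmax a : ℝ) : Set (ℝ → ℝ) :=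
  {x | ContDiffOn ℝ 1 x (Set.Icc t₀ tf) ∧
    LipschitzOnWith (Real.toNNReal a) (deriv x) (Set.Icc t₀ tf) ∧
    (∀ s ∈ Set.Icc t₀ tf, 0 ≤ deriv x s ∧ deriv x s ≤ vmax) ∧
    x t₀ = -x₀ ∧ deriv x t₀ = vmax ∧ x tf = 0 ∧ deriv x tf = vmax}

/-- The closed-form trajectory without a full stop: drive at `v_max`, decelerate at `−a`
to the minimum speed `u = v_max − √(a(v_max·Δ − x₀))`, immediately accelerate at `a`
back to `v_max` at the platoon head's crossing time `t_f1`, then drive at `v_max`. -/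
noncomputable def xStarNoStop (x₀ vmax a t₀ tf1 tf : ℝ) (s : ℝ) : ℝ :=
  let Δ := tf - t₀
  let S := tf - tf1
  let u := vmax - Real.sqrt (a * (vmax * Δ - x₀))
  let tacc := tf1 - (vmax - u) / a
  let tdec := tacc - (vmax - u) / a
  if s ≤ tdec then -x₀ + vmax * (s - t₀)
  else if s ≤ tacc then -x₀ + vmax * (s - t₀) - a / 2 * (s - tdec) ^ 2
  else if s ≤ tf1 then
    -x₀ + vmax * (tacc - t₀) - (vmax - u) ^ 2 / (2 * a)
      + u * (s - tacc) + a / 2 * (s - tacc) ^ 2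
  else -vmax * S + vmax * (s - tf1)

open Set

lemma hasDerivAt_sq_max_sub_zero (b x : ℝ) :
    HasDerivAt (fun y => max (y - b) 0 ^ 2) (2 * max (x - b) 0) x := by
  suffices h : ∀ x : ℝ, HasDerivAt (fun y => max y 0 ^ 2) (2 * max x 0) x from
    HasDerivAt.comp_sub_const x b (h (x - b))
  intro x
  rcases lt_trichotomy x 0 with hx | rfl | hx
  · rw [max_eq_right hx.le, mul_zero]
    refine (hasDerivAt_const x 0).congr_of_eventuallyEq ?_
    filter_upwards [Iio_mem_nhds hx] with y (hy : y < 0)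
    simp [max_eq_right hy.le]
  · have hl : HasDerivWithinAt (fun y : ℝ => max y 0 ^ 2) 0 (Iic 0) 0 :=
      (hasDerivWithinAt_const (0 : ℝ) _ (0 : ℝ)).congr
        (fun y (hy : y ≤ 0) => by simp [max_eq_right hy]) (by simp)
    have hr : HasDerivWithinAt (fun y : ℝ => max y 0 ^ 2) 0 (Ici 0) 0 := by
      refine (((hasDerivAt_pow 2 (0 : ℝ)).hasDerivWithinAt (s := Ici 0)).congr
        (fun y (hy : 0 ≤ y) => by simp [max_eq_left hy]) (by simp)).congr_deriv (by simp)
    simpa [Iic_union_Ici] using hl.union hr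
  · rw [max_eq_left hx.le]
    refine ((hasDerivAt_pow 2 x).congr_deriv (by ring)).congr_of_eventuallyEq ?_
    filter_upwards [Ioi_mem_nhds hx] with y (hy : 0 < y)
    simp [max_eq_left hy.le]

lemma max_sub_abs_sub_zero_eq_ramps {T : ℝ} (hT : 0 ≤ T) (c s : ℝ) :
    max (T - |s - c|) 0 = max (s - (c - T)) 0 - 2 * max (s - c) 0 + max (s - (c + T)) 0 := by
  rcases abs_cases (s - c) with ⟨h, _⟩ | ⟨h, _⟩ <;> rw [h] <;> simp only [max_def] <;>
    split_ifs <;> linarith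

lemma lipschitzWith_one_max_sub_abs_sub_zero (T c : ℝ) :
    LipschitzWith 1 fun s => max (T - |s - c|) 0 := by
  refine LipschitzWith.of_dist_le_mul fun s t => ?_
  simp only [Real.dist_eq, NNReal.coe_one, one_mul]
  calc |max (T - |s - c|) 0 - max (T - |t - c|) 0|
      ≤ |(T - |s - c|) - (T - |t - c|)| := abs_max_sub_max_le_abs _ _ _
    _ = |(|t - c| - |s - c|)| := by ring_nf
    _ ≤ |t - c - (s - c)| := abs_abs_sub_abs_le_abs_sub _ _
    _ = |s - t| := by rw [abs_sub_comm]; ring_nf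

/-- Cruising at speed `v` with a symmetric dip of the speed to `v - a * T`: deceleration at rate
`a` on `[c - T, c]`, acceleration at rate `a` on `[c, c + T]`. The squared ramps at the three
breakpoints make the speed `v - a * max (T - |s - c|) 0` without a case split. -/
noncomputable def dipTraj (p v a c T s : ℝ) : ℝ :=
  p + v * s - a / 2 * (max (s - (c - T)) 0 ^ 2 - 2 * max (s - c) 0 ^ 2 + max (s - (c + T)) 0 ^ 2)

section dipTraj

variable {p v a c T : ℝ}

lemma hasDerivAt_dipTraj (hT : 0 ≤ T) (s : ℝ) :
    HasDerivAt (dipTraj p v a c T) (v - a * max (T - |s - c|) 0) s := by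
  have hramps := ((hasDerivAt_sq_max_sub_zero (c - T) s).sub
    ((hasDerivAt_sq_max_sub_zero c s).const_mul 2)).add (hasDerivAt_sq_max_sub_zero (c + T) s)
  refine ((((hasDerivAt_id s).const_mul v).const_add p).sub (hramps.const_mul (a / 2))).congr_deriv ?_
  rw [max_sub_abs_sub_zero_eq_ramps hT]
  ring

lemma deriv_dipTraj (hT : 0 ≤ T) :
    deriv (dipTraj p v a c T) = fun s => v - a * max (T - |s - c|) 0 :=
  funext fun s => (hasDerivAt_dipTraj hT s).deriv

lemma contDiff_dipTraj (hT : 0 ≤ T) : ContDiff ℝ 1 (dipTraj p v a c T) := by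
  refine contDiff_one_iff_deriv.mpr ⟨fun s => (hasDerivAt_dipTraj hT s).differentiableAt, ?_⟩
  rw [deriv_dipTraj hT]
  exact continuous_const.sub (continuous_const.mul
    (lipschitzWith_one_max_sub_abs_sub_zero T c).continuous)

lemma lipschitzWith_deriv_dipTraj (ha : 0 ≤ a) (hT : 0 ≤ T) :
    LipschitzWith a.toNNReal (deriv (dipTraj p v a c T)) := by
  rw [deriv_dipTraj hT]
  refine LipschitzWith.of_dist_le_mul fun s t => ?_
  have htent := (lipschitzWith_one_max_sub_abs_sub_zero T c).dist_le_mul s t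
  simp only [Real.dist_eq, NNReal.coe_one, one_mul, Real.coe_toNNReal a ha] at htent ⊢
  calc |v - a * max (T - |s - c|) 0 - (v - a * max (T - |t - c|) 0)|
      = a * |max (T - |s - c|) 0 - max (T - |t - c|) 0| := by
        rw [← abs_of_nonneg ha, ← abs_mul, abs_of_nonneg ha, abs_sub_comm]; ring_nf
    _ ≤ a * |s - t| := mul_le_mul_of_nonneg_left htent ha

lemma deriv_dipTraj_mem_Icc (ha : 0 ≤ a) (hT : 0 ≤ T) (s : ℝ) :
    deriv (dipTraj p v a c T) s ∈ Icc (v - a * T) v := by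
  rw [deriv_dipTraj hT]
  constructor
  · have : max (T - |s - c|) 0 ≤ T := max_le (by linarith [abs_nonneg (s - c)]) hT
    nlinarith
  · nlinarith [le_max_right (T - |s - c|) 0]

lemma deriv_dipTraj_center (hT : 0 ≤ T) : deriv (dipTraj p v a c T) c = v - a * T := by
  simp [deriv_dipTraj hT, hT]

lemma deriv_dipTraj_of_le_abs (hT : 0 ≤ T) {s : ℝ} (hs : T ≤ |s - c|) :
    deriv (dipTraj p v a c T) s = v := by
  simp [deriv_dipTraj hT, hs]

lemma dipTraj_of_le (hT : 0 ≤ T) {s : ℝ} (hs : s ≤ c - T) : dipTraj p v a c T s = p + v * s := by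
  rw [dipTraj, max_eq_right (by linarith), max_eq_right (by linarith), max_eq_right (by linarith)]
  ring

lemma dipTraj_of_mem_Icc_left {s : ℝ} (h₁ : c - T ≤ s) (h₂ : s ≤ c) :
    dipTraj p v a c T s = p + v * s - a / 2 * (s - (c - T)) ^ 2 := by
  rw [dipTraj, max_eq_left (by linarith), max_eq_right (by linarith), max_eq_right (by linarith)]
  ring

lemma dipTraj_of_mem_Icc_right {s : ℝ} (h₁ : c ≤ s) (h₂ : s ≤ c + T) :
    dipTraj p v a c T s = p + v * s - a * (T ^ 2 - (c + T - s) ^ 2 / 2) := by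
  rw [dipTraj, max_eq_left (by linarith), max_eq_left (by linarith), max_eq_right (by linarith)]
  ring

lemma dipTraj_of_ge (hT : 0 ≤ T) {s : ℝ} (hs : c + T ≤ s) :
    dipTraj p v a c T s = p + v * s - a * T ^ 2 := by
  rw [dipTraj, max_eq_left (by linarith), max_eq_left (by linarith), max_eq_left (by linarith)]
  ring

end dipTraj

lemma dipTraj_mem_compatTraj {p v a c T t₀ tf x₀ : ℝ} (ha : 0 ≤ a) (hT : 0 ≤ T) (hv : a * T ≤ v)
    (ht₀ : t₀ ≤ c - T) (htf : c + T ≤ tf) (hstart : p + v * t₀ = -x₀)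
    (hend : p + v * tf - a * T ^ 2 = 0) :
    dipTraj p v a c T ∈ CompatTraj t₀ tf x₀ v a := by
  refine ⟨(contDiff_dipTraj hT).contDiffOn, (lipschitzWith_deriv_dipTraj ha hT).lipschitzOnWith,
    fun s _ => ?_, ?_, ?_, ?_, ?_⟩
  · have hs := deriv_dipTraj_mem_Icc (p := p) (v := v) (c := c) ha hT s
    exact ⟨by linarith [hs.1], hs.2⟩
  · rw [dipTraj_of_le hT ht₀, hstart]
  · exact deriv_dipTraj_of_le_abs hT (le_abs.mpr (Or.inr (by linarith)))
  · rw [dipTraj_of_ge hT htf, hend]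
  · exact deriv_dipTraj_of_le_abs hT (le_abs.mpr (Or.inl (by linarith)))

lemma mul_sq_sqrt_mul_div {a d : ℝ} (ha : 0 < a) (hd : 0 ≤ d) : a * (√(a * d) / a) ^ 2 = d := by
  rw [div_pow, Real.sq_sqrt (mul_nonneg ha.le hd)]
  field_simp

lemma xStarNoStop_eq_dipTraj {x₀ vmax a t₀ tf1 tf : ℝ} (ha : 0 < a)
    (hΔ : x₀ ≤ vmax * (tf - t₀)) :
    xStarNoStop x₀ vmax a t₀ tf1 tf =
      dipTraj (-x₀ - vmax * t₀) vmax a (tf1 - √(a * (vmax * (tf - t₀) - x₀)) / a)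
        (√(a * (vmax * (tf - t₀) - x₀)) / a) := by
  have hw2 := Real.sq_sqrt (mul_nonneg ha.le (sub_nonneg.mpr hΔ))
  have hw0 := Real.sqrt_nonneg (a * (vmax * (tf - t₀) - x₀))
  funext s
  simp only [xStarNoStop, sub_sub_cancel]
  generalize √(a * (vmax * (tf - t₀) - x₀)) = w at hw2 hw0 ⊢
  obtain ⟨T, hT, rfl⟩ : ∃ T, 0 ≤ T ∧ w = a * T := ⟨w / a, div_nonneg hw0 ha.le, by field_simp⟩
  have hT2 : a * T ^ 2 = vmax * (tf - t₀) - x₀ :=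
    mul_left_cancel₀ ha.ne' (by linear_combination hw2)
  rw [mul_div_cancel_left₀ T ha.ne']
  split_ifs with h₁ h₂ h₃
  · rw [dipTraj_of_le hT (by linarith)]; ring
  · rw [dipTraj_of_mem_Icc_left (by linarith) h₂]; ring
  · rw [dipTraj_of_mem_Icc_right (by linarith) (by linarith)]; field_simp; ring
  · rw [dipTraj_of_ge hT (by linarith)]; linear_combination hT2

theorem xStarNoStop_feasible_general
    (x₀ vmax a t₀ tf1 tf : ℝ)
    (hv : 0 < vmax) (ha : 0 < a)
    (htf : tf1 ≤ tf)
    (hΔ₁ : x₀ / vmax ≤ tf - t₀)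
    (hΔ₂ : tf - t₀ < x₀ / vmax + vmax / a)
    (hdec : tf1 - 2 * (vmax - (vmax - Real.sqrt (a * (vmax * (tf - t₀) - x₀)))) / a ≥ t₀) :
    xStarNoStop x₀ vmax a t₀ tf1 tf ∈ CompatTraj t₀ tf x₀ vmax a ∧
    xStarNoStop x₀ vmax a t₀ tf1 tf tf1 = -vmax * (tf - tf1) ∧
    deriv (xStarNoStop x₀ vmax a t₀ tf1 tf)
        (tf1 - (vmax - (vmax - Real.sqrt (a * (vmax * (tf - t₀) - x₀)))) / a)
      = vmax - Real.sqrt (a * (vmax * (tf - t₀) - x₀)) ∧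
    0 < vmax - Real.sqrt (a * (vmax * (tf - t₀) - x₀)) ∧
    vmax - Real.sqrt (a * (vmax * (tf - t₀) - x₀)) ≤ vmax := by
  have hΔ : x₀ ≤ vmax * (tf - t₀) := by rwa [div_le_iff₀' hv] at hΔ₁
  have hwv : √(a * (vmax * (tf - t₀) - x₀)) < vmax := by
    refine (Real.sqrt_lt' hv).mpr ((lt_div_iff₀' ha).mp ?_)
    have := mul_lt_mul_of_pos_left hΔ₂ hv
    rw [mul_add, mul_div_cancel₀ _ hv.ne', ← mul_div_assoc, ← sq] at this
    linarith
  rw [xStarNoStop_eq_dipTraj ha hΔ, sub_sub_cancel]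
  rw [sub_sub_cancel, mul_div_assoc] at hdec
  have hT2 := mul_sq_sqrt_mul_div ha (sub_nonneg.mpr hΔ)
  set w := √(a * (vmax * (tf - t₀) - x₀))
  set T := w / a
  have hT : 0 ≤ T := div_nonneg (Real.sqrt_nonneg _) ha.le
  have haT : a * T = w := mul_div_cancel₀ w ha.ne'
  refine ⟨dipTraj_mem_compatTraj ha.le hT (by linarith) (by linarith) (by linarith) (by ring)
    (by linear_combination -hT2), ?_, by rw [deriv_dipTraj_center hT, haT], by linarith,
    by linarith [Real.sqrt_nonneg (a * (vmax * (tf - t₀) - x₀))]⟩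
  rw [dipTraj_of_ge hT (by linarith)]
  linear_combination -hT2

/-- Feasibility of the non-stopping trajectory: under the stated conditions, the
closed-form non-stopping trajectory is a compatible trajectory, is exactly at distance
`v_max·S` from the intersection at the platoon head's crossing time `t_f1`, and attains
its minimum speed `u = v_max − √(a(v_max·Δ − x₀))` (with `0 < u ≤ v_max`) at `t_acc`. -/
theorem xStarNoStop_feasible
    (x₀ vmax a t₀ tf1 tf : ℝ)
    (hx₀ : 0 < x₀) (hv : 0 < vmax) (ha : 0 < a)
    (ht₀ : t₀ < tf1) (htf : tf1 ≤ tf)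
    (hΔ₁ : x₀ / vmax ≤ tf - t₀)
    (hΔ₂ : tf - t₀ < x₀ / vmax + vmax / a)
    (hdec : tf1 - 2 * (vmax - (vmax - Real.sqrt (a * (vmax * (tf - t₀) - x₀)))) / a ≥ t₀) :
    xStarNoStop x₀ vmax a t₀ tf1 tf ∈ CompatTraj t₀ tf x₀ vmax a ∧
    xStarNoStop x₀ vmax a t₀ tf1 tf tf1 = -vmax * (tf - tf1) ∧
    deriv (xStarNoStop x₀ vmax a t₀ tf1 tf)
        (tf1 - (vmax - (vmax - Real.sqrt (a * (vmax * (tf - t₀) - x₀)))) / a)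
      = vmax - Real.sqrt (a * (vmax * (tf - t₀) - x₀)) ∧
    0 < vmax - Real.sqrt (a * (vmax * (tf - t₀) - x₀)) ∧
    vmax - Real.sqrt (a * (vmax * (tf - t₀) - x₀)) ≤ vmax :=
  xStarNoStop_feasible_general x₀ vmax a t₀ tf1 tf hv ha htf hΔ₁ hΔ₂ hdec
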